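/- There exists a constant C > 0 such that for all integers n ≥ 16, k ≥ 2, and ℓ with k ≤ n and ℓ ≥ k³, there exists a uniform (n,k,ℓ)-splitter of size at most C·k⁶·log n. -/

import Mathlib

/-!
Compose the balanced map `x ↦ x mod ℓ` with permutations of `[n]`. A permutation does not change
fibre sizes, so every such map is uniform. Since `Perm [n]` acts 2-transitively, a fixed pair
`x ≠ y` collides for a `1/ℓ`-fraction of permutations at most, so by a union bound over pairs a
random permutation fails to make the map injective on a given `k`-set with probability at most
`k² / ℓ ≤ 1/2`. Among `m = k (⌊log n⌋ + 1)` independent permutations, all fail on one of the at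
most `n^k < 2^m` sets with probability below one; and since `k < ℓ`, injectivity on `S` is exactly
the splitting condition.
-/

open Finset

/-- The number of elements of `[n]` mapped to `i` by `f`. -/
def preimCard {n ℓ : ℕ} (f : Fin n → Fin ℓ) (i : Fin ℓ) : ℕ :=
  (Finset.univ.filter fun x => f x = i).card

/-- The size of the image of `f`. -/
def imageSize {n ℓ : ℕ} (f : Fin n → Fin ℓ) : ℕ :=
  (Finset.univ.image f).card

/-- An `(n,k,ℓ)`-splitter: for every `k`-subset `S` of `[n]` some `f` in the family
splits `S` as evenly as possible into the `ℓ` parts `f⁻¹(i) ∩ S`. -/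
def IsSplitter (n k ℓ : ℕ) (F : Finset (Fin n → Fin ℓ)) : Prop :=
  ∀ S : Finset (Fin n), S.card = k → ∃ f ∈ F, ∀ i : Fin ℓ,
    k / ℓ ≤ (S.filter fun x => f x = i).card ∧
      (S.filter fun x => f x = i).card ≤ (k + ℓ - 1) / ℓ

/-- A uniform family: each `f` has all preimages of elements of its image of size
`⌊n/|Im f|⌋` or `⌈n/|Im f|⌉`. -/
def IsUniformFamily (n ℓ : ℕ) (F : Finset (Fin n → Fin ℓ)) : Prop :=
  ∀ f ∈ F, ∀ i ∈ Finset.univ.image f,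
    n / imageSize f ≤ preimCard f i ∧
      preimCard f i ≤ (n + imageSize f - 1) / imageSize f

/-- An `a`-uniform family: preimage sizes deviate by at most `a` from
`⌊n/|Im f|⌋`/`⌈n/|Im f|⌉`, and any two preimage sizes differ by at most `a`. -/
def IsAUniformFamily (n ℓ a : ℕ) (F : Finset (Fin n → Fin ℓ)) : Prop :=
  ∀ f ∈ F,
    (∀ i ∈ Finset.univ.image f,
      n / imageSize f - a ≤ preimCard f i ∧
        preimCard f i ≤ (n + imageSize f - 1) / imageSize f + a) ∧
    (∀ i ∈ Finset.univ.image f, ∀ j ∈ Finset.univ.image f,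
      |(preimCard f i : ℤ) - (preimCard f j : ℤ)| ≤ (a : ℤ))

/-- A strongly uniform family: for each `f` and every `i ∈ [ℓ]`,
`⌊n/ℓ⌋ ≤ |f⁻¹(i)| ≤ ⌈n/ℓ⌉`. -/
def IsStronglyUniformFamily (n ℓ : ℕ) (F : Finset (Fin n → Fin ℓ)) : Prop :=
  ∀ f ∈ F, ∀ i : Fin ℓ, n / ℓ ≤ preimCard f i ∧ preimCard f i ≤ (n + ℓ - 1) / ℓ

open scoped Nat

section Balanced

variable {α β : Type*} [Fintype α] [DecidableEq β]

def IsBalanced (f : α → β) : Prop :=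
  ∀ i j, #{x | f x = i} ≤ #{x | f x = j} + 1

theorem card_fiber_comp_perm (f : α → β) (σ : Equiv.Perm α) (i : β) :
    #{x | (f ∘ σ) x = i} = #{x | f x = i} :=
  card_nbij' σ σ.symm (fun x hx => by simpa using hx) (fun x hx => by simpa using hx)
    (fun x _ => by simp) (fun x _ => by simp)

theorem IsBalanced.comp_perm {f : α → β} (hf : IsBalanced f) (σ : Equiv.Perm α) :
    IsBalanced (f ∘ σ) := by
  intro i j
  simpa only [card_fiber_comp_perm] using hf i j

theorem IsBalanced.card_fiber_bounds {f : α → β} (hf : IsBalanced f) {I : Finset β}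
    (hI : ∀ x, f x ∈ I) {i : β} (hi : i ∈ I) :
    Fintype.card α / #I ≤ #{x | f x = i} ∧
      #{x | f x = i} ≤ (Fintype.card α + #I - 1) / #I := by
  have hsum : Fintype.card α = ∑ j ∈ I, #{x | f x = j} :=
    card_eq_sum_card_fiberwise fun x _ => hI x
  have hI0 : 0 < #I := card_pos.2 ⟨i, hi⟩
  have hlt : Fintype.card α < #I * (#{x | f x = i} + 1) := by
    rw [hsum, ← smul_eq_mul, ← sum_const]
    exact sum_lt_sum (fun j _ => hf j i) ⟨i, hi, Nat.lt_succ_self _⟩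
  have hgt : #I * #{x | f x = i} < Fintype.card α + #I := by
    have := sum_lt_sum (s := I) (fun j _ => hf i j) ⟨i, hi, Nat.lt_succ_self _⟩
    rwa [sum_const, smul_eq_mul, sum_add_distrib, ← hsum, sum_const, smul_eq_mul, mul_one]
      at this
  constructor
  · exact Nat.lt_succ_iff.1 ((Nat.div_lt_iff_lt_mul hI0).2 (by linarith))
  · rw [Nat.le_div_iff_mul_le hI0, mul_comm]
    omega

end Balanced

def residueMap (n : ℕ) {ℓ : ℕ} (hℓ : 0 < ℓ) : Fin n → Fin ℓ :=
  fun x => ⟨x % ℓ, Nat.mod_lt _ hℓ⟩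

theorem card_residueMap_fiber (n : ℕ) {ℓ : ℕ} (hℓ : 0 < ℓ) (i : Fin ℓ) :
    #{x | residueMap n hℓ x = i} = n / ℓ + if (i : ℕ) < n % ℓ then 1 else 0 := by
  rw [← Nat.mod_eq_of_lt i.isLt, ← Nat.count_modEq_card _ hℓ, Nat.count_eq_card_filter_range,
    ← Nat.Iio_eq_range, ← Fin.map_valEmbedding_univ, filter_map, card_map]
  congr 1
  ext x
  simp [residueMap, Fin.ext_iff, Nat.ModEq, Nat.mod_eq_of_lt i.isLt]

theorem isBalanced_residueMap (n : ℕ) {ℓ : ℕ} (hℓ : 0 < ℓ) :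
    IsBalanced (residueMap n hℓ) := by
  intro i j
  simp only [card_residueMap_fiber]
  split_ifs <;> omega

section PermutationCounting

open Equiv

variable {α : Type*} [Fintype α] [DecidableEq α]

theorem card_perm_apply_pair_eq {x y : α} (hxy : x ≠ y) {q : α × α} (hq : q.1 ≠ q.2) :
    #{π : Perm α | (π x, π y) = q} = #{π : Perm α | (π x, π y) = (x, y)} := by
  obtain ⟨g, hgx, hgy⟩ :=
    MulAction.is_two_pretransitive_iff.mp (Perm.isMultiplyPretransitive α 2) hq hxy
  refine card_nbij' (g * ·) (g⁻¹ * ·) ?_ ?_ (fun π _ => by simp) (fun π _ => by simp)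
  all_goals
    intro π hπ
    simp only [coe_filter, mem_univ, true_and, Set.mem_ofPred_eq, Prod.ext_iff,
      Perm.mul_apply] at hπ ⊢
    rw [hπ.1, hπ.2]
  · exact ⟨hgx, hgy⟩
  · rw [← hgx, ← hgy]
    simp [Perm.smul_def]

theorem card_perm_filter_apply_pair (p : α × α → Prop) [DecidablePred p] {x y : α}
    (hxy : x ≠ y) :
    #{π : Perm α | p (π x, π y)} =
      #{q ∈ univ.offDiag | p q} * #{π : Perm α | (π x, π y) = (x, y)} := by
  rw [card_eq_sum_card_fiberwise (f := fun π : Perm α => (π x, π y))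
    (t := {q ∈ univ.offDiag | p q}) ?_]
  · refine sum_const_nat fun q hq => ?_
    rw [mem_filter, mem_offDiag] at hq
    rw [filter_filter, ← card_perm_apply_pair_eq hxy hq.1.2.2]
    congr 1
    ext π
    simp only [mem_filter, mem_univ, true_and, and_iff_right_iff_imp]
    rintro rfl
    exact hq.2
  · intro π hπ
    simp_all [π.injective.ne hxy]

variable {β : Type*} [DecidableEq β]

theorem card_offDiag_filter_eq_sum (h : α → β) :
    #{q ∈ univ.offDiag | h q.1 = h q.2} = ∑ a, #{b | a ≠ b ∧ h a = h b} := by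
  rw [card_eq_sum_card_fiberwise (f := Prod.fst) (t := univ) (fun _ _ => mem_univ _)]
  refine sum_congr rfl fun a _ => card_nbij' Prod.snd (fun b => (a, b)) ?_ ?_ ?_ ?_ <;>
    intro q hq <;> aesop

variable [Fintype β]

theorem IsBalanced.card_ne_and_eq_le {h : α → β} (hh : IsBalanced h) (a : α) :
    #{b | a ≠ b ∧ h a = h b} ≤ (Fintype.card α - 1) / Fintype.card β := by
  have hβ : 0 < Fintype.card β := Fintype.card_pos_iff.2 ⟨h a⟩
  have hα : 0 < Fintype.card α := Fintype.card_pos_iff.2 ⟨a⟩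
  have herase : #{b | a ≠ b ∧ h a = h b} + 1 = #{b | h b = h a} := by
    rw [← card_erase_add_one (s := {b | h b = h a}) (a := a) (by simp)]
    congr 2
    ext b
    simp [eq_comm, and_comm]
  have hceil : (Fintype.card α + Fintype.card β - 1) / Fintype.card β =
      (Fintype.card α - 1) / Fintype.card β + 1 := by
    rw [← Nat.add_div_right _ hβ]
    congr 1
    omega
  have := (hh.card_fiber_bounds (fun _ => mem_univ _) (mem_univ (h a))).2
  rw [card_univ, hceil] at this
  omega

theorem IsBalanced.card_offDiag_filter_mul_le {h : α → β} (hh : IsBalanced h) :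
    #{q ∈ univ.offDiag | h q.1 = h q.2} * Fintype.card β ≤
      #(univ.offDiag : Finset (α × α)) := by
  calc #{q ∈ univ.offDiag | h q.1 = h q.2} * Fintype.card β
      ≤ (∑ _a : α, (Fintype.card α - 1) / Fintype.card β) * Fintype.card β := by
        rw [card_offDiag_filter_eq_sum]
        gcongr with a
        exact hh.card_ne_and_eq_le a
    _ = Fintype.card α * ((Fintype.card α - 1) / Fintype.card β * Fintype.card β) := by
        rw [sum_const, card_univ, smul_eq_mul, mul_assoc]
    _ ≤ Fintype.card α * (Fintype.card α - 1) := Nat.mul_le_mul_left _ (Nat.div_mul_le_self _ _)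
    _ = #(univ.offDiag : Finset (α × α)) := by rw [offDiag_card, card_univ, Nat.mul_sub_one]

theorem IsBalanced.card_perm_collision_mul_le {h : α → β} (hh : IsBalanced h) {x y : α}
    (hxy : x ≠ y) :
    #{π : Perm α | h (π x) = h (π y)} * Fintype.card β ≤ (Fintype.card α)! := by
  have hall := card_perm_filter_apply_pair (fun _ => True) hxy
  have hcoll := card_perm_filter_apply_pair (fun q => h q.1 = h q.2) hxy
  simp only [filter_true, card_univ, Fintype.card_perm] at hall hcoll
  rw [hcoll, hall, mul_right_comm]
  exact Nat.mul_le_mul_right _ hh.card_offDiag_filter_mul_le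

theorem IsBalanced.card_perm_not_injOn_mul_le {h : α → β} (hh : IsBalanced h) (S : Finset α) :
    #{π : Perm α | ¬Set.InjOn (h ∘ π) S} * Fintype.card β ≤
      #S ^ 2 * (Fintype.card α)! := by
  have hsub : ({π : Perm α | ¬Set.InjOn (h ∘ π) S} : Finset (Perm α)) ⊆
      S.offDiag.biUnion fun q => {π : Perm α | h (π q.1) = h (π q.2)} := by
    intro π hπ
    simp only [Set.InjOn, Function.comp_apply, mem_coe, not_forall, mem_filter, mem_univ,
      true_and] at hπ
    obtain ⟨x, hx, y, hy, hxy, hne⟩ := hπ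
    exact mem_biUnion.2
      ⟨(x, y), mem_offDiag.2 ⟨hx, hy, hne⟩, mem_filter.2 ⟨mem_univ _, hxy⟩⟩
  calc #{π : Perm α | ¬Set.InjOn (h ∘ π) S} * Fintype.card β
      ≤ ∑ q ∈ S.offDiag, #{π : Perm α | h (π q.1) = h (π q.2)} * Fintype.card β := by
        rw [← sum_mul]
        gcongr
        exact (card_le_card hsub).trans card_biUnion_le
    _ ≤ ∑ _q ∈ S.offDiag, (Fintype.card α)! :=
        sum_le_sum fun q hq => hh.card_perm_collision_mul_le (mem_offDiag.1 hq).2.2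
    _ ≤ #S ^ 2 * (Fintype.card α)! := by
        rw [sum_const, smul_eq_mul, offDiag_card, sq]
        gcongr
        exact Nat.sub_le _ _

theorem IsBalanced.card_perm_not_injOn_mul_two_le {h : α → β} (hh : IsBalanced h)
    {S : Finset α} (hS : S.Nonempty) (hSβ : 2 * #S ^ 2 ≤ Fintype.card β) :
    #{π : Perm α | ¬Set.InjOn (h ∘ π) S} * 2 ≤ (Fintype.card α)! := by
  have hS2 : 0 < #S ^ 2 := by positivity
  refine Nat.le_of_mul_le_mul_left ?_ hS2
  calc #S ^ 2 * (#{π : Perm α | ¬Set.InjOn (h ∘ π) S} * 2)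
      ≤ #{π : Perm α | ¬Set.InjOn (h ∘ π) S} * Fintype.card β := by
        rw [mul_comm, mul_assoc]
        exact Nat.mul_le_mul_left _ (by linarith)
    _ ≤ #S ^ 2 * (Fintype.card α)! := hh.card_perm_not_injOn_mul_le S

end PermutationCounting

theorem exists_tuple_forall_exists_notMem {Ω ι : Type*} [Fintype Ω] [DecidableEq Ω]
    [Nonempty Ω] (T : Finset ι) (B : ι → Finset Ω) {r m : ℕ}
    (hB : ∀ S ∈ T, #(B S) * r ≤ Fintype.card Ω) (hT : #T < r ^ m) :
    ∃ g : Fin m → Ω, ∀ S ∈ T, ∃ j, g j ∉ B S := by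
  set U := T.biUnion fun S => Fintype.piFinset fun _ : Fin m => B S
  have hU : #U * r ^ m < Fintype.card Ω ^ m * r ^ m :=
    calc #U * r ^ m ≤ (∑ S ∈ T, #(B S) ^ m) * r ^ m := by
          gcongr
          refine card_biUnion_le.trans (sum_le_sum fun S _ => ?_)
          rw [Fintype.card_piFinset, prod_const, card_univ, Fintype.card_fin]
      _ = ∑ S ∈ T, (#(B S) * r) ^ m := by simp only [sum_mul, mul_pow]
      _ ≤ ∑ _S ∈ T, Fintype.card Ω ^ m :=
          sum_le_sum fun S hS => Nat.pow_le_pow_left (hB S hS) m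
      _ = #T * Fintype.card Ω ^ m := by rw [sum_const, smul_eq_mul]
      _ < r ^ m * Fintype.card Ω ^ m := Nat.mul_lt_mul_of_pos_right hT (by positivity)
      _ = Fintype.card Ω ^ m * r ^ m := mul_comm _ _
  obtain ⟨g, -, hg⟩ := exists_mem_notMem_of_card_lt_card (s := U) (t := univ)
    (by simpa [Fintype.card_fun] using Nat.lt_of_mul_lt_mul_right hU)
  refine ⟨g, fun S hS => ?_⟩
  by_contra! hall
  exact hg (mem_biUnion.2 ⟨S, hS, Fintype.mem_piFinset.2 hall⟩)

theorem isSplitter_of_forall_exists_injOn {n k ℓ : ℕ} (hkℓ : k < ℓ)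
    {F : Finset (Fin n → Fin ℓ)} (hF : ∀ S : Finset (Fin n), #S = k → ∃ f ∈ F, Set.InjOn f S) :
    IsSplitter n k ℓ F := by
  intro S hS
  obtain ⟨f, hf, hinj⟩ := hF S hS
  refine ⟨f, hf, fun i => ?_⟩
  have hle_one : #{x ∈ S | f x = i} ≤ 1 := card_le_one.2 fun a ha b hb =>
    hinj (mem_filter.1 ha).1 (mem_filter.1 hb).1
      ((mem_filter.1 ha).2.trans (mem_filter.1 hb).2.symm)
  have hle_k : #{x ∈ S | f x = i} ≤ k := hS ▸ card_filter_le _ _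
  rw [Nat.div_eq_of_lt hkℓ]
  refine ⟨Nat.zero_le _, ?_⟩
  rcases Nat.eq_zero_or_pos k with rfl | hk
  · exact hle_k.trans (Nat.zero_le _)
  · exact hle_one.trans ((Nat.one_le_div_iff (by omega)).2 (by omega))

theorem isUniformFamily_of_forall_isBalanced {n ℓ : ℕ} {F : Finset (Fin n → Fin ℓ)}
    (hF : ∀ f ∈ F, IsBalanced f) : IsUniformFamily n ℓ F := by
  intro f hf i hi
  have := (hF f hf).card_fiber_bounds (fun x => mem_image_of_mem f (mem_univ x)) hi
  rwa [Fintype.card_fin] at this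

theorem pow_lt_two_pow_mul_log_succ (n : ℕ) {k : ℕ} (hk : k ≠ 0) :
    n ^ k < 2 ^ (k * (Nat.log 2 n + 1)) := by
  rw [mul_comm, pow_mul]
  exact Nat.pow_lt_pow_left (Nat.lt_pow_succ_log_self one_lt_two n) hk

theorem mul_log_succ_le_logb {n : ℕ} (k : ℕ) (hn : 2 ≤ n) :
    ((k * (Nat.log 2 n + 1) : ℕ) : ℝ) ≤ 2 * (k : ℝ) ^ 6 * Real.logb 2 n := by
  have hlog : (1 : ℝ) ≤ Nat.log 2 n := by
    exact_mod_cast Nat.le_log_of_pow_le one_lt_two (by simpa using hn)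
  have hlogb : (Nat.log 2 n : ℝ) ≤ Real.logb 2 n := Real.natLog_le_logb n 2
  have hk6 : (k : ℝ) ≤ (k : ℝ) ^ 6 := by exact_mod_cast Nat.le_self_pow (by norm_num) k
  push_cast
  nlinarith

/-- There is a constant `C > 0` such that for `n ≥ 16`, `2 ≤ k ≤ n` and `ℓ ≥ k³`,
there is a uniform `(n,k,ℓ)`-splitter of size at most `C·k⁶·log n`. -/
theorem uniform_splitter_main :
    ∃ C : ℝ, 0 < C ∧ ∀ n k ℓ : ℕ, 16 ≤ n → 2 ≤ k → k ≤ n → k ^ 3 ≤ ℓ →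
      ∃ F : Finset (Fin n → Fin ℓ),
        IsSplitter n k ℓ F ∧ IsUniformFamily n ℓ F ∧
          (F.card : ℝ) ≤ C * (k : ℝ) ^ 6 * Real.logb 2 n := by
  refine ⟨2, two_pos, fun n k ℓ hn hk _ hkℓ => ?_⟩
  have hk2ℓ : 2 * k ^ 2 ≤ ℓ := le_trans (by nlinarith) hkℓ
  have hℓ : 0 < ℓ := by nlinarith
  set h := residueMap n hℓ
  have hbal : IsBalanced h := isBalanced_residueMap n hℓ
  have hbad : ∀ S ∈ powersetCard k (univ : Finset (Fin n)),
      #{π : Equiv.Perm (Fin n) | ¬Set.InjOn (h ∘ π) S} * 2 ≤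
        Fintype.card (Equiv.Perm (Fin n)) := by
    intro S hS
    rw [mem_powersetCard_univ] at hS
    rw [Fintype.card_perm]
    refine hbal.card_perm_not_injOn_mul_two_le (card_pos.1 (by omega)) ?_
    rwa [hS, Fintype.card_fin]
  obtain ⟨g, hg⟩ := exists_tuple_forall_exists_notMem _ _ hbad
    (by simpa using (Nat.choose_le_pow n k).trans_lt (pow_lt_two_pow_mul_log_succ n (by omega)))
  refine ⟨univ.image fun j => h ∘ g j, ?_, ?_, ?_⟩
  · refine isSplitter_of_forall_exists_injOn (by nlinarith) fun S hS => ?_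
    obtain ⟨j, hj⟩ := hg S (mem_powersetCard_univ.2 hS)
    exact ⟨h ∘ g j, mem_image_of_mem _ (mem_univ j), by simpa using hj⟩
  · refine isUniformFamily_of_forall_isBalanced fun f hf => ?_
    obtain ⟨j, -, rfl⟩ := mem_image.1 hf
    exact hbal.comp_perm (g j)
  · calc ((univ.image fun j => h ∘ g j).card : ℝ) ≤ (k * (Nat.log 2 n + 1) : ℕ) := by
          exact_mod_cast card_image_le.trans (by simp)
      _ ≤ 2 * (k : ℝ) ^ 6 * Real.logb 2 n := mul_log_succ_le_logb k (by omega)
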